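/- arXiv:2402.19386 — 3 statements merged into one kernel-verified Lean document; each statement's English description precedes it below -/
import Mathlib

section
/- Let κ > 1, c : ℝ → [κ⁻¹, κ] continuous, F(u) = ∫₀^u c(r) dr, and define 𝔲(R,S) := F⁻¹(∂ₓ⁻¹((R−S)/2)) for R, S ∈ L¹(𝕋). Then ‖𝔲(R₁,S₁) − 𝔲(R₂,S₂)‖_{L^∞(𝕋)} ≤ 2κ (‖R₁ − R₂‖_{L¹(𝕋)} + ‖S₁ − S₂‖_{L¹(𝕋)}). -/
open MeasureTheory

/-- The zero-average antiderivative operator `∂ₓ⁻¹` on the torus `[0,1]`. -/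
noncomputable def Dinv (g : ℝ → ℝ) (x : ℝ) : ℝ :=
  (∫ y in (0:ℝ)..x, g y) - x * (∫ y in (0:ℝ)..1, g y)
    - ∫ y in (0:ℝ)..1, ((∫ z in (0:ℝ)..y, g z) - y * ∫ z in (0:ℝ)..1, g z)

/-- The construction `𝔲(R,S) = F⁻¹(∂ₓ⁻¹((R−S)/2))`. -/
noncomputable def uCon (F R S : ℝ → ℝ) (x : ℝ) : ℝ :=
  Function.invFun F (Dinv (fun y => (R y - S y) / 2) x)

/-!
`F` is a primitive of `c ≥ κ⁻¹`, so it is continuous, onto, and expands distances by a factor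
at least `κ⁻¹`; hence `F⁻¹ = invFun F` is `κ`-Lipschitz. On `[0,1]` the operator `∂ₓ⁻¹` is linear,
and since `|∫₀ʸ g|` and `|y ∫₀¹ g|` are at most `‖g‖_{L¹}` for `y ∈ [0,1]`, the function
`y ↦ ∫₀ʸ g - y ∫₀¹ g` is bounded by `2 ‖g‖_{L¹}`; `∂ₓ⁻¹ g` is this function minus its mean, so
`|∂ₓ⁻¹ g| ≤ 4 ‖g‖_{L¹}`. With `g = (R₁ - S₁)/2 - (R₂ - S₂)/2`, whose `L¹` norm is at most half of
`‖R₁ - R₂‖_{L¹} + ‖S₁ - S₂‖_{L¹}`, the constant is `κ · 4 · ½ = 2κ`.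
-/

open Set Filter Function

section Primitive

variable {c F : ℝ → ℝ} {m : ℝ}

theorem mul_sub_le_sub_of_primitive (hc : ∀ a b, IntervalIntegrable c volume a b)
    (hcm : ∀ r, m ≤ c r) (hF : ∀ u, F u = ∫ r in (0:ℝ)..u, c r) {u v : ℝ} (hvu : v ≤ u) :
    m * (u - v) ≤ F u - F v := by
  rw [hF, hF, intervalIntegral.integral_interval_sub_left (hc 0 u) (hc 0 v)]
  calc m * (u - v) = ∫ _ in v..u, m := by simp [mul_comm]
    _ ≤ ∫ r in v..u, c r :=
      intervalIntegral.integral_mono_on hvu intervalIntegrable_const (hc v u) fun r _ => hcm r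

theorem surjective_of_primitive (hm : 0 < m) (hc : ∀ a b, IntervalIntegrable c volume a b)
    (hcm : ∀ r, m ≤ c r) (hF : ∀ u, F u = ∫ r in (0:ℝ)..u, c r) : Surjective F := by
  have hF0 : F 0 = 0 := by simp [hF]
  have hFc : Continuous F := by
    simpa only [← funext hF] using intervalIntegral.continuous_primitive hc 0
  refine hFc.surjective ?_ ?_
  · refine tendsto_atTop_mono' _ ?_ (tendsto_id.const_mul_atTop hm)
    filter_upwards [eventually_ge_atTop 0] with u hu
    simpa [hF0] using mul_sub_le_sub_of_primitive hc hcm hF hu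
  · refine tendsto_atBot_mono' _ ?_ (tendsto_id.const_mul_atBot hm)
    filter_upwards [eventually_le_atBot 0] with u hu
    simpa [hF0] using mul_sub_le_sub_of_primitive hc hcm hF hu

theorem antilipschitzWith_of_primitive {K : NNReal} (hK : 0 < K)
    (hc : ∀ a b, IntervalIntegrable c volume a b) (hcK : ∀ r, (K : ℝ)⁻¹ ≤ c r)
    (hF : ∀ u, F u = ∫ r in (0:ℝ)..u, c r) : AntilipschitzWith K F := by
  refine AntilipschitzWith.of_le_mul_dist fun u v => ?_
  wlog hvu : v ≤ u generalizing u v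
  · simpa only [dist_comm] using this v u (le_of_not_ge hvu)
  have hgap := mul_sub_le_sub_of_primitive hc hcK hF hvu
  rw [Real.dist_eq, Real.dist_eq, abs_of_nonneg (sub_nonneg.2 hvu)]
  calc u - v = K * ((K : ℝ)⁻¹ * (u - v)) := by field_simp
    _ ≤ K * |F u - F v| := by gcongr; exact hgap.trans (le_abs_self _)

theorem lipschitzWith_invFun_of_primitive {K : NNReal} (hK : 0 < K)
    (hc : ∀ a b, IntervalIntegrable c volume a b) (hcK : ∀ r, (K : ℝ)⁻¹ ≤ c r)
    (hF : ∀ u, F u = ∫ r in (0:ℝ)..u, c r) : LipschitzWith K (invFun F) :=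
  (antilipschitzWith_of_primitive hK hc hcK hF).to_rightInverse
    (rightInverse_invFun (surjective_of_primitive (by positivity) hc hcK hF))

end Primitive

section Dinv

variable {g g₁ g₂ : ℝ → ℝ} {x y : ℝ}

noncomputable def periodicPrimitive (g : ℝ → ℝ) (y : ℝ) : ℝ :=
  (∫ z in (0:ℝ)..y, g z) - y * ∫ z in (0:ℝ)..1, g z

theorem Dinv_eq_periodicPrimitive_sub_integral (g : ℝ → ℝ) (x : ℝ) :
    Dinv g x = periodicPrimitive g x - ∫ y in (0:ℝ)..1, periodicPrimitive g y :=
  rfl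

theorem intervalIntegrable_of_mem_Icc (hg : IntervalIntegrable g volume 0 1)
    (hx : x ∈ Icc (0:ℝ) 1) (hy : y ∈ Icc (0:ℝ) 1) : IntervalIntegrable g volume x y :=
  hg.mono_set (by rw [uIcc_of_le zero_le_one]; exact uIcc_subset_Icc hx hy)

theorem intervalIntegrable_periodicPrimitive (hg : IntervalIntegrable g volume 0 1) :
    IntervalIntegrable (periodicPrimitive g) volume 0 1 := by
  refine ContinuousOn.intervalIntegrable ?_
  have hprim := intervalIntegral.continuousOn_primitive_interval' hg left_mem_uIcc
  exact hprim.sub (continuousOn_id.mul continuousOn_const)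

theorem periodicPrimitive_sub (hg₁ : IntervalIntegrable g₁ volume 0 1)
    (hg₂ : IntervalIntegrable g₂ volume 0 1) (hy : y ∈ Icc (0:ℝ) 1) :
    periodicPrimitive (g₁ - g₂) y = periodicPrimitive g₁ y - periodicPrimitive g₂ y := by
  have h0 : (0:ℝ) ∈ Icc (0:ℝ) 1 := left_mem_Icc.2 zero_le_one
  simp only [periodicPrimitive, Pi.sub_apply,
    intervalIntegral.integral_sub (intervalIntegrable_of_mem_Icc hg₁ h0 hy)
      (intervalIntegrable_of_mem_Icc hg₂ h0 hy),
    intervalIntegral.integral_sub hg₁ hg₂]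
  ring

theorem Dinv_sub (hg₁ : IntervalIntegrable g₁ volume 0 1)
    (hg₂ : IntervalIntegrable g₂ volume 0 1) (hx : x ∈ Icc (0:ℝ) 1) :
    Dinv (g₁ - g₂) x = Dinv g₁ x - Dinv g₂ x := by
  have hmean : ∫ y in (0:ℝ)..1, periodicPrimitive (g₁ - g₂) y
      = ∫ y in (0:ℝ)..1, (periodicPrimitive g₁ y - periodicPrimitive g₂ y) :=
    intervalIntegral.integral_congr fun y hy =>
      periodicPrimitive_sub hg₁ hg₂ (by rwa [uIcc_of_le zero_le_one] at hy)
  simp only [Dinv_eq_periodicPrimitive_sub_integral, periodicPrimitive_sub hg₁ hg₂ hx, hmean,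
    intervalIntegral.integral_sub (intervalIntegrable_periodicPrimitive hg₁)
      (intervalIntegrable_periodicPrimitive hg₂)]
  ring

theorem abs_integral_le_integral_abs_of_mem_Icc (hg : IntervalIntegrable g volume 0 1)
    (hy : y ∈ Icc (0:ℝ) 1) : |∫ z in (0:ℝ)..y, g z| ≤ ∫ z in (0:ℝ)..1, |g z| :=
  (intervalIntegral.abs_integral_le_integral_abs hy.1).trans <|
    intervalIntegral.integral_mono_interval le_rfl hy.1 hy.2
      (ae_of_all _ fun z => abs_nonneg (g z)) hg.abs

theorem abs_periodicPrimitive_le (hg : IntervalIntegrable g volume 0 1)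
    (hy : y ∈ Icc (0:ℝ) 1) : |periodicPrimitive g y| ≤ 2 * ∫ z in (0:ℝ)..1, |g z| := by
  have hprim := abs_integral_le_integral_abs_of_mem_Icc hg hy
  have htotal := abs_integral_le_integral_abs_of_mem_Icc hg (right_mem_Icc.2 zero_le_one)
  calc |periodicPrimitive g y|
      ≤ |∫ z in (0:ℝ)..y, g z| + y * |∫ z in (0:ℝ)..1, g z| :=
        (abs_sub _ _).trans_eq (by rw [abs_mul, abs_of_nonneg hy.1])
    _ ≤ (∫ z in (0:ℝ)..1, |g z|) + 1 * ∫ z in (0:ℝ)..1, |g z| := by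
        gcongr; exact hy.2
    _ = 2 * ∫ z in (0:ℝ)..1, |g z| := by ring

theorem abs_Dinv_le (hg : IntervalIntegrable g volume 0 1) (hx : x ∈ Icc (0:ℝ) 1) :
    |Dinv g x| ≤ 4 * ∫ z in (0:ℝ)..1, |g z| := by
  have hmean : |∫ y in (0:ℝ)..1, periodicPrimitive g y| ≤ 2 * ∫ z in (0:ℝ)..1, |g z| := by
    have := intervalIntegral.norm_integral_le_of_norm_le_const (f := periodicPrimitive g)
      fun y hy => (abs_periodicPrimitive_le hg
        (Ioc_subset_Icc_self (by rwa [uIoc_of_le zero_le_one] at hy)) :)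
    rwa [Real.norm_eq_abs, sub_zero, abs_one, mul_one] at this
  calc |Dinv g x| ≤ |periodicPrimitive g x| + |∫ y in (0:ℝ)..1, periodicPrimitive g y| :=
        abs_sub _ _
    _ ≤ 2 * (∫ z in (0:ℝ)..1, |g z|) + 2 * ∫ z in (0:ℝ)..1, |g z| :=
        add_le_add (abs_periodicPrimitive_le hg hx) hmean
    _ = 4 * ∫ z in (0:ℝ)..1, |g z| := by ring

end Dinv

theorem integral_abs_half_sub_half_sub_le {R₁ S₁ R₂ S₂ : ℝ → ℝ} {a b : ℝ} (hab : a ≤ b)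
    (hR₁ : IntervalIntegrable R₁ volume a b) (hS₁ : IntervalIntegrable S₁ volume a b)
    (hR₂ : IntervalIntegrable R₂ volume a b) (hS₂ : IntervalIntegrable S₂ volume a b) :
    ∫ y in a..b, |(R₁ y - S₁ y) / 2 - (R₂ y - S₂ y) / 2|
      ≤ ((∫ y in a..b, |R₁ y - R₂ y|) + ∫ y in a..b, |S₁ y - S₂ y|) / 2 := by
  have hR := (hR₁.sub hR₂).abs
  have hS := (hS₁.sub hS₂).abs
  calc ∫ y in a..b, |(R₁ y - S₁ y) / 2 - (R₂ y - S₂ y) / 2|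
      ≤ ∫ y in a..b, (|R₁ y - R₂ y| + |S₁ y - S₂ y|) / 2 := by
        refine intervalIntegral.integral_mono_on hab
          (((hR₁.sub hS₁).div_const 2).sub ((hR₂.sub hS₂).div_const 2)).abs
          ((hR.add hS).div_const 2) fun y _ => ?_
        rw [show (R₁ y - S₁ y) / 2 - (R₂ y - S₂ y) / 2 = ((R₁ y - R₂ y) - (S₁ y - S₂ y)) / 2 by
          ring, abs_div, abs_two]
        gcongr
        exact abs_sub _ _
    _ = ((∫ y in a..b, |R₁ y - R₂ y|) + ∫ y in a..b, |S₁ y - S₂ y|) / 2 := by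
        rw [intervalIntegral.integral_div]
        congr 1
        exact intervalIntegral.integral_add hR hS

theorem uCon_Linfty_Lipschitz_general
    (κ : ℝ) (hκ : 1 < κ)
    (c : ℝ → ℝ) (hc : Continuous c)
    (hlb : ∀ r, κ⁻¹ ≤ c r)
    (F : ℝ → ℝ) (hF : ∀ u, F u = ∫ r in (0:ℝ)..u, c r)
    (R₁ S₁ R₂ S₂ : ℝ → ℝ)
    (hR₁ : IntegrableOn R₁ (Set.Icc (0:ℝ) 1)) (hS₁ : IntegrableOn S₁ (Set.Icc (0:ℝ) 1))
    (hR₂ : IntegrableOn R₂ (Set.Icc (0:ℝ) 1)) (hS₂ : IntegrableOn S₂ (Set.Icc (0:ℝ) 1)) :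
    ∀ x ∈ Set.Icc (0:ℝ) 1,
      |uCon F R₁ S₁ x - uCon F R₂ S₂ x| ≤
        2 * κ * ((∫ y in (0:ℝ)..1, |R₁ y - R₂ y|) + ∫ y in (0:ℝ)..1, |S₁ y - S₂ y|) := by
  intro x hx
  have hκ₀ : 0 ≤ κ := by linarith
  have hI {f : ℝ → ℝ} (hf : IntegrableOn f (Icc 0 1)) : IntervalIntegrable f volume 0 1 :=
    (intervalIntegrable_iff_integrableOn_Icc_of_le zero_le_one).2 hf
  have hLip : LipschitzWith κ.toNNReal (invFun F) :=
    lipschitzWith_invFun_of_primitive (by simpa using hκ.trans_le' zero_le_one)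
      (fun a b => hc.intervalIntegrable a b) (by simpa [hκ₀] using hlb) hF
  set g₁ := fun y => (R₁ y - S₁ y) / 2
  set g₂ := fun y => (R₂ y - S₂ y) / 2
  have hg₁ : IntervalIntegrable g₁ volume 0 1 := (hI hR₁).sub (hI hS₁) |>.div_const 2
  have hg₂ : IntervalIntegrable g₂ volume 0 1 := (hI hR₂).sub (hI hS₂) |>.div_const 2
  calc |uCon F R₁ S₁ x - uCon F R₂ S₂ x| ≤ κ * |Dinv g₁ x - Dinv g₂ x| := by
        have := hLip.dist_le_mul (Dinv g₁ x) (Dinv g₂ x)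
        rwa [Real.dist_eq, Real.dist_eq, Real.coe_toNNReal _ hκ₀] at this
    _ ≤ κ * (4 * ∫ y in (0:ℝ)..1, |g₁ y - g₂ y|) := by
        rw [← Dinv_sub hg₁ hg₂ hx]
        gcongr
        exact abs_Dinv_le (hg₁.sub hg₂) hx
    _ ≤ κ * (4 * (((∫ y in (0:ℝ)..1, |R₁ y - R₂ y|) + ∫ y in (0:ℝ)..1, |S₁ y - S₂ y|) / 2)) := by
        gcongr
        exact integral_abs_half_sub_half_sub_le zero_le_one (hI hR₁) (hI hS₁) (hI hR₂) (hI hS₂)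
    _ = 2 * κ * ((∫ y in (0:ℝ)..1, |R₁ y - R₂ y|) + ∫ y in (0:ℝ)..1, |S₁ y - S₂ y|) := by ring

/-- `‖𝔲(R₁,S₁) − 𝔲(R₂,S₂)‖_{L^∞(𝕋)} ≤ 2κ (‖R₁−R₂‖_{L¹} + ‖S₁−S₂‖_{L¹})`. -/
theorem uCon_Linfty_Lipschitz
    (κ : ℝ) (hκ : 1 < κ)
    (c : ℝ → ℝ) (hc : Continuous c)
    (hlb : ∀ r, κ⁻¹ ≤ c r) (hub : ∀ r, c r ≤ κ)
    (F : ℝ → ℝ) (hF : ∀ u, F u = ∫ r in (0:ℝ)..u, c r)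
    (R₁ S₁ R₂ S₂ : ℝ → ℝ)
    (hR₁ : IntegrableOn R₁ (Set.Icc (0:ℝ) 1)) (hS₁ : IntegrableOn S₁ (Set.Icc (0:ℝ) 1))
    (hR₂ : IntegrableOn R₂ (Set.Icc (0:ℝ) 1)) (hS₂ : IntegrableOn S₂ (Set.Icc (0:ℝ) 1)) :
    ∀ x ∈ Set.Icc (0:ℝ) 1,
      |uCon F R₁ S₁ x - uCon F R₂ S₂ x| ≤
        2 * κ * ((∫ y in (0:ℝ)..1, |R₁ y - R₂ y|) + ∫ y in (0:ℝ)..1, |S₁ y - S₂ y|) :=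
  uCon_Linfty_Lipschitz_general κ hκ c hc hlb F hF R₁ S₁ R₂ S₂ hR₁ hS₁ hR₂ hS₂
end

section
/- Let c be C¹ with κ⁻¹ ≤ c ≤ κ, F(u) = ∫₀^u c, and suppose R − S : 𝕋 → ℝ is continuous with zero spatial average. Define u := F⁻¹(∂ₓ⁻¹((R − S)/2)). Then u is C¹ on the torus and satisfies the constitutive relation 2 c(u(x)) ∂ₓ u(x) = R(x) − S(x) for all x ∈ 𝕋, and F∘u has zero average over 𝕋. -/
/-!
Since `c ≥ κ⁻¹ > 0`, the primitive `F` grows at least linearly in both directions, hence is an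
increasing bijection of `ℝ` with `F' = c`, and `F⁻¹` is differentiable with derivative
`1 / c ∘ F⁻¹`. The operator `∂ₓ⁻¹` has derivative `g - ∫₀¹ g`, preserves `1`-periodicity and
produces functions of mean zero. With `g = (R - S) / 2` of mean zero, the chain rule gives
`2 c(u) u' = 2 g = R - S`, and `F ∘ u = ∂ₓ⁻¹ g` has mean zero.
-/

open MeasureTheory

open Filter Function

theorem surjective_of_le_deriv {f : ℝ → ℝ} (hf : Differentiable ℝ f) {C : ℝ} (hC : 0 < C)
    (hf' : ∀ x, C ≤ deriv f x) : Surjective f := by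
  have hlin : ∀ ⦃x y⦄, x ≤ y → C * (y - x) ≤ f y - f x :=
    mul_sub_le_image_sub_of_le_deriv hf hf'
  refine hf.continuous.surjective ?_ ?_
  · refine tendsto_atTop_mono' _ ?_ (tendsto_atTop_add_const_right _ (f 0)
      (tendsto_id.const_mul_atTop hC))
    filter_upwards [eventually_ge_atTop 0] with y hy
    linarith [show C * id y = C * (y - 0) by simp, hlin hy]
  · refine tendsto_atBot_mono' _ ?_ (tendsto_atBot_add_const_right _ (f 0)
      (tendsto_id.const_mul_atBot hC))
    filter_upwards [eventually_le_atBot 0] with x hx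
    linarith [show C * id x = -(C * (0 - x)) by simp, hlin hx]

theorem StrictMono.invFun_eq_orderIsoOfSurjective_symm {α β : Type*} [LinearOrder α]
    [LinearOrder β] [Nonempty α] {f : α → β} (hf : StrictMono f) (hs : Surjective f) :
    invFun f = (hf.orderIsoOfSurjective f hs).symm := by
  funext y
  apply hf.injective
  rw [rightInverse_invFun hs y]
  exact ((hf.orderIsoOfSurjective f hs).apply_symm_apply y).symm

theorem StrictMono.continuous_invFun {α β : Type*} [LinearOrder α] [TopologicalSpace α]
    [OrderTopology α] [LinearOrder β] [TopologicalSpace β] [OrderTopology β] [Nonempty α]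
    {f : α → β} (hf : StrictMono f) (hs : Surjective f) : Continuous (invFun f) := by
  rw [hf.invFun_eq_orderIsoOfSurjective_symm hs]
  exact (hf.orderIsoOfSurjective f hs).symm.continuous

theorem hasDerivAt_invFun_of_pos_deriv {f f' : ℝ → ℝ} (hf : ∀ x, HasDerivAt f (f' x) x)
    (hf' : ∀ x, 0 < f' x) (hs : Surjective f) (y : ℝ) :
    HasDerivAt (invFun f) (f' (invFun f y))⁻¹ y := by
  have hmono : StrictMono f := strictMono_of_deriv_pos fun x => (hf x).deriv ▸ hf' x
  exact (hf _).of_local_left_inverse (hmono.continuous_invFun hs).continuousAt (hf' _).ne'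
    (Eventually.of_forall (rightInverse_invFun hs))

section Dinv

variable {g : ℝ → ℝ}

theorem hasDerivAt_Dinv (hg : Continuous g) (x : ℝ) :
    HasDerivAt (Dinv g) (g x - ∫ y in (0:ℝ)..1, g y) x := by
  have hG : HasDerivAt (fun x => ∫ y in (0:ℝ)..x, g y) (g x) x :=
    hg.integral_hasStrictDerivAt 0 x |>.hasDerivAt
  have h := (hG.sub ((hasDerivAt_id x).mul_const (∫ y in (0:ℝ)..1, g y))).sub_const
    (∫ y in (0:ℝ)..1, ((∫ z in (0:ℝ)..y, g z) - y * ∫ z in (0:ℝ)..1, g z))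
  rwa [one_mul] at h

theorem Dinv_periodic (hg : Continuous g) (hper : Periodic g 1) : Periodic (Dinv g) 1 := by
  intro x
  have hshift : (∫ y in (0:ℝ)..(x + 1), g y) = (∫ y in (0:ℝ)..x, g y) + ∫ y in (0:ℝ)..1, g y := by
    rw [← intervalIntegral.integral_add_adjacent_intervals (hg.intervalIntegrable 0 x)
      (hg.intervalIntegrable x (x + 1)), hper.intervalIntegral_add_eq x 0, zero_add]
  simp only [Dinv, hshift]
  ring

theorem integral_Dinv (hg : Continuous g) : ∫ x in (0:ℝ)..1, Dinv g x = 0 := by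
  have hH : Continuous fun y => (∫ z in (0:ℝ)..y, g z) - y * ∫ z in (0:ℝ)..1, g z := by
    fun_prop
  simp only [Dinv]
  rw [intervalIntegral.integral_sub (hH.intervalIntegrable 0 1) intervalIntegrable_const]
  simp

end Dinv

theorem constitutive_solution_general
    (κ : ℝ) (hκ : 1 < κ)
    (c : ℝ → ℝ) (hc : ContDiff ℝ 1 c)
    (hlb : ∀ r, κ⁻¹ ≤ c r)
    (F : ℝ → ℝ) (hF : ∀ v, F v = ∫ r in (0:ℝ)..v, c r)
    (R S : ℝ → ℝ)
    (hRS : Continuous (fun x => R x - S x))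
    (hper : Function.Periodic (fun x => R x - S x) 1)
    (havg : ∫ x in (0:ℝ)..1, (R x - S x) = 0) :
    ContDiff ℝ 1 (fun x => Function.invFun F (Dinv (fun y => (R y - S y) / 2) x)) ∧
    Function.Periodic (fun x => Function.invFun F (Dinv (fun y => (R y - S y) / 2) x)) 1 ∧
    (∀ x, 2 * c (Function.invFun F (Dinv (fun y => (R y - S y) / 2) x))
        * deriv (fun z => Function.invFun F (Dinv (fun y => (R y - S y) / 2) z)) x
      = R x - S x) ∧
    (∫ x in (0:ℝ)..1,
        F (Function.invFun F (Dinv (fun y => (R y - S y) / 2) x))) = 0 := by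
  set g : ℝ → ℝ := fun y => (R y - S y) / 2
  have hg : Continuous g := hRS.div_const 2
  have hg_avg : ∫ y in (0:ℝ)..1, g y = 0 := by
    simp only [g, intervalIntegral.integral_div, havg, zero_div]
  have hκ_inv : 0 < κ⁻¹ := inv_pos.2 (zero_lt_one.trans hκ)
  have hc_pos : ∀ r, 0 < c r := fun r => hκ_inv.trans_le (hlb r)
  have hF_deriv : ∀ v, HasDerivAt F (c v) v := fun v => by
    rw [funext hF]
    exact (hc.continuous.integral_hasStrictDerivAt 0 v).hasDerivAt
  have hF_surj : Surjective F := surjective_of_le_deriv (fun v => (hF_deriv v).differentiableAt)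
    hκ_inv fun v => (hF_deriv v).deriv ▸ hlb v
  set u : ℝ → ℝ := fun x => invFun F (Dinv g x)
  have hu : ∀ x, HasDerivAt u ((c (u x))⁻¹ * g x) x := fun x => by
    have h := (hasDerivAt_invFun_of_pos_deriv hF_deriv hc_pos hF_surj _).comp x
      (hasDerivAt_Dinv hg x)
    rwa [hg_avg, sub_zero] at h
  have hu_cont : Continuous u := continuous_iff_continuousAt.2 fun x => (hu x).continuousAt
  refine ⟨?_, fun x =>
    congrArg (invFun F) (Dinv_periodic hg (fun x => congrArg (· / 2) (hper x)) x), fun x => ?_, ?_⟩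
  · rw [contDiff_one_iff_deriv, funext fun x => (hu x).deriv]
    exact ⟨fun x => (hu x).differentiableAt,
      ((hc.continuous.comp hu_cont).inv₀ fun x => (hc_pos _).ne').mul hg⟩
  · rw [(hu x).deriv, mul_assoc 2, mul_inv_cancel_left₀ (hc_pos _).ne']
    exact mul_div_cancel₀ _ two_ne_zero
  · rw [intervalIntegral.integral_congr fun x _ => rightInverse_invFun hF_surj (Dinv g x)]
    exact integral_Dinv hg

/-- with `R − S` continuous, periodic, with zero average, the function
`u := F⁻¹(∂ₓ⁻¹((R − S)/2))` is `C¹` on the torus, satisfies `2 c(u) ∂ₓu = R − S`,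
and `F ∘ u` has zero average. -/
theorem constitutive_solution
    (κ : ℝ) (hκ : 1 < κ)
    (c : ℝ → ℝ) (hc : ContDiff ℝ 1 c)
    (hlb : ∀ r, κ⁻¹ ≤ c r) (hub : ∀ r, c r ≤ κ)
    (F : ℝ → ℝ) (hF : ∀ v, F v = ∫ r in (0:ℝ)..v, c r)
    (R S : ℝ → ℝ)
    (hRS : Continuous (fun x => R x - S x))
    (hper : Function.Periodic (fun x => R x - S x) 1)
    (havg : ∫ x in (0:ℝ)..1, (R x - S x) = 0) :
    ContDiff ℝ 1 (fun x => Function.invFun F (Dinv (fun y => (R y - S y) / 2) x)) ∧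
    Function.Periodic (fun x => Function.invFun F (Dinv (fun y => (R y - S y) / 2) x)) 1 ∧
    (∀ x, 2 * c (Function.invFun F (Dinv (fun y => (R y - S y) / 2) x))
        * deriv (fun z => Function.invFun F (Dinv (fun y => (R y - S y) / 2) z)) x
      = R x - S x) ∧
    (∫ x in (0:ℝ)..1,
        F (Function.invFun F (Dinv (fun y => (R y - S y) / 2) x))) = 0 :=
  constitutive_solution_general κ hκ c hc hlb F hF R S hRS hper havg
end

section
/- Let c : ℝ → [κ⁻¹, κ] be C¹ with |c'| ≤ κ, c̃ = c'/(4c), and let u : 𝕋 → ℝ be C¹ satisfying 2c(u)∂ₓu = R − S with R, S ∈ C¹(𝕋). Then ½∫_𝕋 c(u) ∂ₓ(R² − S²) dx + ∫_𝕋 c̃(u)(R−S)(R²−S²) dx = 0. -/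
open MeasureTheory

/-!
By the chain rule and the constraint `2 c(u) ∂ₓu = R − S`, pointwise
`c̃(u)(R − S)(R² − S²) = ½ ∂ₓ(c ∘ u) (R² − S²)`, so the second integral is `½ ∫ ∂ₓ(c ∘ u) (R² − S²)`. Integrating by parts over a period,
with no boundary terms by periodicity, turns the first integral into its negative.
-/

theorem intervalIntegral.integral_mul_deriv_eq_neg_deriv_mul_of_periodic {f g : ℝ → ℝ} {T : ℝ}
    (hf : ContDiff ℝ 1 f) (hg : ContDiff ℝ 1 g) (hfT : Function.Periodic f T)
    (hgT : Function.Periodic g T) (a : ℝ) :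
    ∫ x in a..a + T, f x * deriv g x = -∫ x in a..a + T, deriv f x * g x := by
  rw [intervalIntegral.integral_mul_deriv_eq_deriv_mul
    (fun x _ => (hf.differentiable one_ne_zero x).hasDerivAt)
    (fun x _ => (hg.differentiable one_ne_zero x).hasDerivAt)
    ((hf.continuous_deriv le_rfl).intervalIntegrable _ _)
    ((hg.continuous_deriv le_rfl).intervalIntegrable _ _), hfT a, hgT a]
  ring

-- At `c = 0` the division is junk, but then `r = s` and both sides vanish.
theorem div_four_mul_mul_sub_mul_sq_sub_sq {c c' v r s : ℝ} (h : 2 * c * v = r - s) :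
    c' / (4 * c) * (r - s) * (r ^ 2 - s ^ 2) = (1 / 2) * (c' * v) * (r ^ 2 - s ^ 2) := by
  rcases eq_or_ne c 0 with hc | hc
  · obtain rfl : r = s := by simp only [hc, mul_zero, zero_mul] at h; linarith
    simp
  · rw [← h]
    field_simp
    ring

theorem energy_cancellation_general
    (c : ℝ → ℝ) (hc : ContDiff ℝ 1 c)
    (u R S : ℝ → ℝ)
    (hu : ContDiff ℝ 1 u) (huper : Function.Periodic u 1)
    (hR : ContDiff ℝ 1 R) (hRper : Function.Periodic R 1)
    (hS : ContDiff ℝ 1 S) (hSper : Function.Periodic S 1)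
    (hcon : ∀ x, 2 * c (u x) * deriv u x = R x - S x) :
    (1/2) * (∫ x in (0:ℝ)..1, c (u x) * deriv (fun y => R y ^ 2 - S y ^ 2) x)
      + (∫ x in (0:ℝ)..1,
          (deriv c (u x) / (4 * c (u x))) * (R x - S x) * (R x ^ 2 - S x ^ 2)) = 0 := by
  have hchain : ∀ x, deriv (fun y => c (u y)) x = deriv c (u x) * deriv u x := fun x =>
    deriv_comp x (hc.differentiable one_ne_zero (u x)) (hu.differentiable one_ne_zero x)
  have hparts : ∫ x in (0:ℝ)..1, c (u x) * deriv (fun y => R y ^ 2 - S y ^ 2) x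
      = -∫ x in (0:ℝ)..1, deriv (fun y => c (u y)) x * (R x ^ 2 - S x ^ 2) := by
    simpa only [zero_add, Function.comp_def] using
      intervalIntegral.integral_mul_deriv_eq_neg_deriv_mul_of_periodic (hc.comp hu)
        ((hR.pow 2).sub (hS.pow 2)) (huper.comp c)
        ((hRper.comp (· ^ 2)).sub (hSper.comp (· ^ 2))) 0
  have hI₂ : ∫ x in (0:ℝ)..1,
        (deriv c (u x) / (4 * c (u x))) * (R x - S x) * (R x ^ 2 - S x ^ 2)
      = (1 / 2) * ∫ x in (0:ℝ)..1, deriv (fun y => c (u y)) x * (R x ^ 2 - S x ^ 2) := by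
    rw [← intervalIntegral.integral_const_mul]
    refine intervalIntegral.integral_congr fun x _ => ?_
    rw [div_four_mul_mul_sub_mul_sq_sub_sq (hcon x), hchain x, mul_assoc]
  rw [hI₂, hparts]
  ring

/-- the cancellation `I₁ + I₂ = 0` in the energy estimate:
`½∫ c(u) ∂ₓ(R² − S²) dx + ∫ c̃(u)(R−S)(R²−S²) dx = 0` where `c̃ = c'/(4c)`
and `2c(u)∂ₓu = R − S`. -/
theorem energy_cancellation
    (κ : ℝ) (hκ : 1 < κ)
    (c : ℝ → ℝ) (hc : ContDiff ℝ 1 c)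
    (hlb : ∀ r, κ⁻¹ ≤ c r) (hub : ∀ r, c r ≤ κ) (hder : ∀ r, |deriv c r| ≤ κ)
    (u R S : ℝ → ℝ)
    (hu : ContDiff ℝ 1 u) (huper : Function.Periodic u 1)
    (hR : ContDiff ℝ 1 R) (hRper : Function.Periodic R 1)
    (hS : ContDiff ℝ 1 S) (hSper : Function.Periodic S 1)
    (hcon : ∀ x, 2 * c (u x) * deriv u x = R x - S x) :
    (1/2) * (∫ x in (0:ℝ)..1, c (u x) * deriv (fun y => R y ^ 2 - S y ^ 2) x)
      + (∫ x in (0:ℝ)..1,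
          (deriv c (u x) / (4 * c (u x))) * (R x - S x) * (R x ^ 2 - S x ^ 2)) = 0 :=
  energy_cancellation_general c hc u R S hu huper hR hRper hS hSper hcon
end
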